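/- There exists a constant C₁ > 0 such that for μ-almost every irrational x ∈ (0,1] there is N ∈ ℕ with q̂_n(x) ≤ e^{C₁·n} for all n ≥ N. -/

import Mathlib

open MeasureTheory Filter

noncomputable section

/-- The ECF digit `k` of a point `x ∈ (0,1]`: `x ∈ B(k,ξ)`. -/
def ecfK (x : ℝ) : ℕ := (⌊1/x⌋ + 1).toNat / 2

/-- The ECF digit `ξ` of a point `x ∈ (0,1]`. -/
def ecfXi (x : ℝ) : ℤ := if ⌊1/x⌋ % 2 = 0 then 1 else -1

/-- The ECF Gauss-like map `T(x) = ξ (1/x - 2k)` for `x ∈ B(k,ξ)`. -/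
def ecfT (x : ℝ) : ℝ := (ecfXi x : ℝ) * (1/x - 2 * (ecfK x : ℝ))

/-- The domain: irrational points of `(0,1]`. -/
def ECFdom : Set ℝ := {x | x ∈ Set.Ioc (0:ℝ) 1 ∧ Irrational x}

/-- The `n`-th ECF digit `k_n(x)` (for `n ≥ 1`). -/
def ecfDigK (x : ℝ) (n : ℕ) : ℕ := ecfK (ecfT^[n-1] x)

/-- The `n`-th ECF digit `ξ_n(x)` (for `n ≥ 1`), with the convention `ξ_0 = 1`. -/
def ecfDigXi (x : ℝ) (n : ℕ) : ℤ := if n = 0 then 1 else ecfXi (ecfT^[n-1] x)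

/-- Numerators of continued fractions with even partial quotients built from digit
sequences `(k_n)_{n≥1}`, `(ξ_n)_{n≥0}`:
`p_n = 2 k_n p_{n-1} + ξ_{n-1} p_{n-2}`, `p_0 = 0`, `p_{-1} = 1`. -/
def cfP (k : ℕ → ℕ) (ξ : ℕ → ℤ) : ℕ → ℤ
  | 0 => 0
  | 1 => ξ 0
  | (n+2) => 2 * (k (n+2) : ℤ) * cfP k ξ (n+1) + ξ (n+1) * cfP k ξ n

/-- Denominators: `q_n = 2 k_n q_{n-1} + ξ_{n-1} q_{n-2}`, `q_0 = 1`, `q_{-1} = 0`. -/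
def cfQ (k : ℕ → ℕ) (ξ : ℕ → ℤ) : ℕ → ℤ
  | 0 => 1
  | 1 => 2 * (k 1 : ℤ)
  | (n+2) => 2 * (k (n+2) : ℤ) * cfQ k ξ (n+1) + ξ (n+1) * cfQ k ξ n

/-- The ECF convergent numerators `p_n(x)`. -/
def ecfP (x : ℝ) : ℕ → ℤ := cfP (ecfDigK x) (ecfDigXi x)

/-- The ECF convergent denominators `q_n(x)`. -/
def ecfQ (x : ℝ) : ℕ → ℤ := cfQ (ecfDigK x) (ecfDigXi x)

/-- `τ(x) = min {j ≥ 0 : T^j(x) ∈ (0,1/2]}`. -/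
def ecfTau (x : ℝ) : ℕ := sInf {j : ℕ | ecfT^[j] x ∈ Set.Ioc (0:ℝ) (1/2)}

/-- The jump transformation `R(x) = T^{τ(x)+1}(x)`. -/
def ecfR (x : ℝ) : ℝ := ecfT^[ecfTau x + 1] x

/-- `ν_0(x) = 1`, `ν_n(x) = ν_{n-1}(x) + τ(R^{n-1}(x)) + 1`. -/
def ecfNu (x : ℝ) : ℕ → ℕ
  | 0 => 1
  | (n+1) => ecfNu x n + ecfTau (ecfR^[n] x) + 1

/-- The `R`-denominators: `q̂_0(x) = 1`, `q̂_n(x) = q_{ν_n(x)}(x)`. -/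
def ecfQhat (x : ℝ) (n : ℕ) : ℤ := if n = 0 then 1 else ecfQ x (ecfNu x n)

/-- The renewal time `n̂_L(x) = min {n ≥ 1 : q̂_n(x) > L}`. -/
def ecfNhat (x : ℝ) (L : ℝ) : ℕ := sInf {n : ℕ | 1 ≤ n ∧ L < (ecfQhat x n : ℝ)}

/-- The `R`-invariant probability measure `μ`, with density
`f(x) = (1/log 3)(1/(3-x) + 1/(1+x))` on `(0,1]`. -/
def ecfMu : Measure ℝ :=
  (volume.restrict (Set.Ioc 0 1)).withDensity
    (fun x => ENNReal.ofReal ((1/Real.log 3) * (1/(3-x) + 1/(1+x))))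

/-- Σ-coding components: `h_n(x) = τ(R^{n-1}(x))`. -/
def sigmaH (x : ℝ) (n : ℕ) : ℕ := ecfTau (ecfR^[n-1] x)

/-- Σ-coding components: `m_n(x) = k_{ν_n(x)-1}(x)`. -/
def sigmaM (x : ℝ) (n : ℕ) : ℕ := ecfDigK x (ecfNu x n - 1)

/-- Σ-coding components: `ε_n(x) = ξ_{ν_n(x)-1}(x)`. -/
def sigmaE (x : ℝ) (n : ℕ) : ℤ := ecfDigXi x (ecfNu x n - 1)

/-- The alphabet `Σ = ℕ₀ × ((ℕ × {±1}) ∖ {(1,-1)})`, as a subset of `ℕ × (ℕ × ℤ)`. -/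
def SigmaSymb : Set (ℕ × (ℕ × ℤ)) :=
  {s | 1 ≤ s.2.1 ∧ ((s.2.2 = 1 ∨ s.2.2 = -1) ∧ ¬(s.2.1 = 1 ∧ s.2.2 = -1))}

/-- The full Σ-coding `σ_n(x) = (h_n, (m_n, ε_n))`. -/
def sigmaCode (x : ℝ) (n : ℕ) : ℕ × (ℕ × ℤ) := (sigmaH x n, (sigmaM x n, sigmaE x n))

end

/-!
The ECF digits of `x` group into Σ-blocks: a run of `h` digits `(1, -1)` followed by a digit
`(m, ε) ≠ (1, -1)`. Along a run `q` grows only arithmetically, but across a whole block it still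
grows by a factor `≥ (h + 1) m / 3`, and `q̂_n ≤ 3 k q_{ν_n - 1}` with `k = k_{ν_n}`.

All points sharing the first `n` blocks and the digit `k` lie in an interval of length
`≤ 9 / (k q_{ν_n - 1})²`, and the density of `μ` is at most `2`. Write
`(k q)⁻² = (k q)^{-1/2} (k q)^{-3/2}`: on the event `q̂_n > e^{C n}` the first factor is
`≲ e^{-C n / 2}`, and the second is at most `k^{-3/2} ∏ ((h_j + 1) m_j / 3)^{-3/2}`, whose sum
over all codes is `≲ K^n` for a finite `K`. Hence `μ(q̂_n > e^{C n}) ≲ (e^{-C/2} K)^n`, which is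
summable once `C` is large, and Borel–Cantelli concludes.
-/

open scoped ENNReal

variable {x y : ℝ}

lemma pos_of_mem_ECFdom (hx : x ∈ ECFdom) : 0 < x := hx.1.1

lemma lt_one_of_mem_ECFdom (hx : x ∈ ECFdom) : x < 1 :=
  lt_of_le_of_ne hx.1.2 fun h => hx.2 ⟨1, by simp [h]⟩

lemma ecfXi_eq_one_or (x : ℝ) : ecfXi x = 1 ∨ ecfXi x = -1 := by
  unfold ecfXi; split_ifs <;> simp

lemma ecfDigXi_eq_one_or (x : ℝ) (i : ℕ) : ecfDigXi x i = 1 ∨ ecfDigXi x i = -1 := by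
  unfold ecfDigXi; split_ifs
  exacts [Or.inl rfl, ecfXi_eq_one_or _]

lemma two_mul_ecfK_add_ecfXi_mul_ecfT (x : ℝ) :
    2 * (ecfK x : ℝ) + ecfXi x * ecfT x = 1 / x := by
  rcases ecfXi_eq_one_or x with h | h <;> simp [ecfT, h]

lemma one_le_floor_one_div (hx : x ∈ ECFdom) : 1 ≤ ⌊1 / x⌋ :=
  Int.le_floor.2 (by simpa using one_le_one_div (pos_of_mem_ECFdom hx) hx.1.2)

lemma floor_one_div_lt (hx : x ∈ ECFdom) : (⌊1 / x⌋ : ℝ) < 1 / x :=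
  (Int.floor_le _).lt_of_ne fun h => (one_div x ▸ hx.2.inv).ne_int _ h.symm

lemma natCast_ecfK (hx : x ∈ ECFdom) : (ecfK x : ℤ) = (⌊1 / x⌋ + 1) / 2 := by
  have := one_le_floor_one_div hx
  rw [ecfK, Int.natCast_div, Int.toNat_of_nonneg (by omega)]
  rfl

lemma ecfK_pos (hx : x ∈ ECFdom) : 1 ≤ ecfK x := by
  have := natCast_ecfK hx
  have := one_le_floor_one_div hx
  omega

lemma ecfK_bounds (hx : x ∈ ECFdom) :
    2 * (ecfK x : ℝ) - 1 < 1 / x ∧ 1 / x < 2 * ecfK x + 1 := by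
  have hk := natCast_ecfK hx
  have hlo : 2 * (ecfK x : ℤ) - 1 ≤ ⌊1 / x⌋ := by omega
  have hhi : ⌊1 / x⌋ ≤ 2 * (ecfK x : ℤ) := by omega
  have := floor_one_div_lt hx
  have := Int.lt_floor_add_one (1 / x)
  constructor
  · have : 2 * (ecfK x : ℝ) - 1 ≤ ⌊1 / x⌋ := by exact_mod_cast hlo
    linarith
  · have : (⌊1 / x⌋ : ℝ) ≤ 2 * ecfK x := by exact_mod_cast hhi
    linarith

lemma ecfT_mem (hx : x ∈ ECFdom) : ecfT x ∈ ECFdom := by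
  have hk := natCast_ecfK hx
  have hlt := floor_one_div_lt hx
  have hlt' := Int.lt_floor_add_one (1 / x)
  have hirr : Irrational (1 / x) := one_div x ▸ hx.2.inv
  set m := ⌊1 / x⌋
  by_cases hm : m % 2 = 0
  · have hT : ecfT x = 1 / x - m := by
      have : (ecfK x : ℝ) * 2 = m := by exact_mod_cast (by omega : (ecfK x : ℤ) * 2 = m)
      rw [ecfT, show ecfXi x = 1 from if_pos hm]
      push_cast; linarith
    exact hT ▸ ⟨⟨by linarith, by linarith⟩, hirr.sub_intCast m⟩
  · have hT : ecfT x = (m + 1 : ℤ) - 1 / x := by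
      have : (ecfK x : ℝ) * 2 = m + 1 := by
        exact_mod_cast (by omega : (ecfK x : ℤ) * 2 = m + 1)
      rw [ecfT, show ecfXi x = -1 from if_neg hm]
      push_cast; linarith
    exact hT ▸ ⟨⟨by push_cast; linarith, by push_cast; linarith⟩, hirr.intCast_sub _⟩

lemma mapsTo_ecfT : Set.MapsTo ecfT ECFdom ECFdom := fun _ => ecfT_mem

lemma ecfK_ecfXi_of_half_lt (hx : x ∈ ECFdom) (h : 1 / 2 < x) :
    ecfK x = 1 ∧ ecfXi x = -1 := by
  have hx0 := pos_of_mem_ECFdom hx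
  have hm : ⌊1 / x⌋ = 1 := by
    rw [Int.floor_eq_iff]
    constructor
    · simpa using one_le_one_div hx0 hx.1.2
    · rw [div_lt_iff₀ hx0]; push_cast; linarith
  constructor
  · rw [ecfK, hm]; rfl
  · rw [ecfXi, hm]; rfl

lemma two_le_ecfK_of_lt_half (hx : x ∈ ECFdom) (h : x < 1 / 2) (hξ : ecfXi x = -1) :
    2 ≤ ecfK x := by
  have hk := natCast_ecfK hx
  have hm : (2 : ℤ) ≤ ⌊1 / x⌋ :=
    Int.le_floor.2 (by rw [le_div_iff₀ (pos_of_mem_ECFdom hx)]; push_cast; linarith)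
  have hodd : ¬ ⌊1 / x⌋ % 2 = 0 := fun he => by
    rw [ecfXi, if_pos he] at hξ; exact absurd hξ (by norm_num)
  omega

lemma abs_sub_le_of_ecfK_eq (hx : x ∈ ECFdom) (hy : y ∈ ECFdom) (h : ecfK x = ecfK y) :
    |x - y| ≤ 1 / (ecfK x : ℝ) ^ 2 := by
  have hx0 := pos_of_mem_ECFdom hx
  have hy0 := pos_of_mem_ECFdom hy
  obtain ⟨hx1, hx2⟩ := ecfK_bounds hx
  obtain ⟨hy1, hy2⟩ := ecfK_bounds hy
  rw [← h] at hy1 hy2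
  have hk : (1 : ℝ) ≤ ecfK x := by exact_mod_cast ecfK_pos hx
  set k : ℝ := (ecfK x : ℝ)
  rw [lt_div_iff₀ hx0] at hx1; rw [div_lt_iff₀ hx0] at hx2
  rw [lt_div_iff₀ hy0] at hy1; rw [div_lt_iff₀ hy0] at hy2
  have hxy : (4 * k ^ 2 - 1) * (x - y) < 2 := by nlinarith
  have hyx : (4 * k ^ 2 - 1) * (y - x) < 2 := by nlinarith
  rw [le_div_iff₀ (by positivity)]
  rcases abs_cases (x - y) with ⟨h, _⟩ | ⟨h, _⟩ <;> rw [h] <;> nlinarith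

lemma ecfT_iterate_mem (hx : x ∈ ECFdom) (n : ℕ) : ecfT^[n] x ∈ ECFdom :=
  mapsTo_ecfT.iterate n hx

lemma ecfDigK_pos (hx : x ∈ ECFdom) (i : ℕ) : 1 ≤ ecfDigK x i :=
  ecfK_pos (ecfT_iterate_mem hx _)

lemma one_div_one_sub_ecfT (hx : x ∈ ECFdom) (h : 1 / 2 < x) :
    1 / (1 - ecfT x) = 1 / (1 - x) - 1 := by
  obtain ⟨hk, hξ⟩ := ecfK_ecfXi_of_half_lt hx h
  have hx0 := pos_of_mem_ECFdom hx
  have hx1 := lt_one_of_mem_ECFdom hx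
  have hT : 1 - ecfT x = (1 - x) / x := by
    rw [ecfT, hk, hξ]; field_simp; push_cast; ring
  have : 1 - x ≠ 0 := by linarith
  rw [hT, one_div_div]
  field_simp
  ring

/-- While the orbit stays in `(1/2, 1)` the digit is `(1, -1)` and `1 / (1 - T^j x)` drops by
one at each step. -/
lemma exists_ecfT_iterate_mem_Ioc (hx : x ∈ ECFdom) :
    ∃ j, ecfT^[j] x ∈ Set.Ioc (0 : ℝ) (1 / 2) := by
  by_contra! hnot
  have hbig : ∀ j, 1 / 2 < ecfT^[j] x := fun j =>
    lt_of_not_ge fun hle => hnot j ⟨pos_of_mem_ECFdom (ecfT_iterate_mem hx j), hle⟩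
  have hdrop : ∀ j : ℕ, 1 / (1 - ecfT^[j] x) = 1 / (1 - x) - j := by
    intro j
    induction j with
    | zero => simp
    | succ j ih =>
      rw [Function.iterate_succ_apply',
        one_div_one_sub_ecfT (ecfT_iterate_mem hx j) (hbig j), ih]
      push_cast; ring
  set j := ⌈1 / (1 - x)⌉₊
  have hpos : 0 < 1 / (1 - ecfT^[j] x) := by
    have := lt_one_of_mem_ECFdom (ecfT_iterate_mem hx j)
    exact one_div_pos.2 (by linarith)
  have := Nat.le_ceil (1 / (1 - x))
  linarith [hdrop j]

lemma ecfT_iterate_ecfTau_mem (hx : x ∈ ECFdom) :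
    ecfT^[ecfTau x] x ∈ Set.Ioc (0 : ℝ) (1 / 2) :=
  Nat.sInf_mem (exists_ecfT_iterate_mem_Ioc hx)

lemma ecfT_iterate_ecfTau_lt (hx : x ∈ ECFdom) : ecfT^[ecfTau x] x < 1 / 2 :=
  (ecfT_iterate_ecfTau_mem hx).2.lt_of_ne fun h =>
    (ecfT_iterate_mem hx _).2 ⟨1 / 2, by rw [h]; push_cast; ring⟩

lemma half_lt_ecfT_iterate (hx : x ∈ ECFdom) {l : ℕ} (hl : l < ecfTau x) :
    1 / 2 < ecfT^[l] x :=
  lt_of_not_ge fun hle =>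
    Nat.notMem_of_lt_sInf hl ⟨pos_of_mem_ECFdom (ecfT_iterate_mem hx l), hle⟩

lemma ecfR_iterate_mem (hx : x ∈ ECFdom) (j : ℕ) : ecfR^[j] x ∈ ECFdom :=
  Set.MapsTo.iterate (fun _ hy => ecfT_iterate_mem hy _) j hx

lemma ecfNu_succ_eq (j : ℕ) : ecfNu x (j + 1) = ecfNu x j + sigmaH x (j + 1) + 1 := rfl

lemma one_le_ecfNu (j : ℕ) : 1 ≤ ecfNu x j := by
  cases j <;> simp [ecfNu]

lemma ecfNu_succ_sub_one (j : ℕ) : ecfNu x (j + 1) - 1 = ecfNu x j + sigmaH x (j + 1) := rfl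

lemma ecfR_iterate_eq (j : ℕ) : ecfR^[j] x = ecfT^[ecfNu x j - 1] x := by
  induction j with
  | zero => rfl
  | succ j ih =>
    have := one_le_ecfNu (x := x) j
    rw [ecfNu, Function.iterate_succ_apply', ecfR, ih, ← Function.iterate_add_apply]
    congr 1
    omega

lemma ecfT_iterate_ecfNu_add (j l : ℕ) :
    ecfT^[ecfNu x j + l - 1] x = ecfT^[l] (ecfR^[j] x) := by
  have := one_le_ecfNu (x := x) j
  rw [ecfR_iterate_eq, ← Function.iterate_add_apply]
  congr 1
  omega

lemma ecfDig_of_lt_sigmaH (hx : x ∈ ECFdom) {j l : ℕ} (hl : l < sigmaH x (j + 1)) :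
    ecfDigK x (ecfNu x j + l) = 1 ∧ ecfDigXi x (ecfNu x j + l) = -1 := by
  have hnu := one_le_ecfNu (x := x) j
  have := ecfK_ecfXi_of_half_lt (ecfT_iterate_mem (ecfR_iterate_mem hx j) l)
    (half_lt_ecfT_iterate (ecfR_iterate_mem hx j) hl)
  rwa [ecfDigK, ecfDigXi, if_neg (by omega), ecfT_iterate_ecfNu_add]

lemma two_le_ecfNu {n : ℕ} (hn : n ≠ 0) : 2 ≤ ecfNu x n := by
  obtain ⟨j, rfl⟩ := Nat.exists_eq_succ_of_ne_zero hn
  have := one_le_ecfNu (x := x) j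
  rw [ecfNu_succ_eq]
  omega

lemma two_le_ecfDigK_of_ecfNu_eq (hx : x ∈ ECFdom) {n M : ℕ} (hn : n ≠ 0)
    (hM : ecfNu x n = M + 2) (hξ : ecfDigXi x (M + 1) = -1) : 2 ≤ ecfDigK x (M + 1) := by
  obtain ⟨j, rfl⟩ := Nat.exists_eq_succ_of_ne_zero hn
  have hy := ecfR_iterate_mem hx j
  have hpt : ecfT^[M] x = ecfT^[ecfTau (ecfR^[j] x)] (ecfR^[j] x) := by
    have : ecfNu x j + sigmaH x (j + 1) + 1 = M + 2 := hM
    rw [← ecfT_iterate_ecfNu_add]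
    congr 1
    change _ = ecfNu x j + sigmaH x (j + 1) - 1
    omega
  rw [ecfDigXi, if_neg (by omega), Nat.add_sub_cancel, hpt] at hξ
  rw [ecfDigK, Nat.add_sub_cancel, hpt]
  exact two_le_ecfK_of_lt_half (ecfT_iterate_mem hy _) (ecfT_iterate_ecfTau_lt hy) hξ

section Recurrence

variable {k k' : ℕ → ℕ} {ξ ξ' : ℕ → ℤ}

lemma cfQ_add_two (i : ℕ) :
    cfQ k ξ (i + 2) = 2 * (k (i + 2) : ℤ) * cfQ k ξ (i + 1) + ξ (i + 1) * cfQ k ξ i := rfl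

lemma cfP_add_two (i : ℕ) :
    cfP k ξ (i + 2) = 2 * (k (i + 2) : ℤ) * cfP k ξ (i + 1) + ξ (i + 1) * cfP k ξ i := rfl

lemma one_le_cfQ_and_le_succ (hk : ∀ i, 1 ≤ k i) (hξ : ∀ i, ξ i = 1 ∨ ξ i = -1)
    (i : ℕ) :
    1 ≤ cfQ k ξ i ∧ cfQ k ξ i ≤ cfQ k ξ (i + 1) := by
  induction i with
  | zero =>
    have := hk 1
    simp only [cfQ]
    omega
  | succ i ih =>
    refine ⟨by omega, ?_⟩
    rw [cfQ_add_two]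
    have : cfQ k ξ (i + 1) ≤ k (i + 2) * cfQ k ξ (i + 1) :=
      le_mul_of_one_le_left (by omega) (by exact_mod_cast hk (i + 2))
    rcases hξ (i + 1) with h | h <;> rw [h] <;> linarith

lemma one_le_cfQ (hk : ∀ i, 1 ≤ k i) (hξ : ∀ i, ξ i = 1 ∨ ξ i = -1) (i : ℕ) :
    1 ≤ cfQ k ξ i :=
  (one_le_cfQ_and_le_succ hk hξ i).1

lemma cfQ_monotone (hk : ∀ i, 1 ≤ k i) (hξ : ∀ i, ξ i = 1 ∨ ξ i = -1) :
    Monotone (cfQ k ξ) :=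
  monotone_nat_of_le_succ fun i => (one_le_cfQ_and_le_succ hk hξ i).2

lemma cfQ_succ_bounds (hk : ∀ i, 1 ≤ k i) (hξ : ∀ i, ξ i = 1 ∨ ξ i = -1) (i : ℕ) :
    (2 * (k (i + 1) : ℤ) - 1) * cfQ k ξ i ≤ cfQ k ξ (i + 1) ∧
      cfQ k ξ (i + 1) ≤ (2 * (k (i + 1) : ℤ) + 1) * cfQ k ξ i := by
  cases i with
  | zero => simp only [zero_add, cfQ]; omega
  | succ i =>
    rw [cfQ_add_two]
    have h0 := one_le_cfQ hk hξ i
    have h1 := cfQ_monotone hk hξ (Nat.le_succ i)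
    rcases hξ (i + 1) with h | h <;> rw [h] <;> constructor <;> nlinarith

/-- `hend` holds at the end of every Σ-block; inside a run of digits `(1, -1)` it fails, and
there `q_{M+1} - t q_M` can be much smaller than `q_{M+1}`. -/
lemma cfQ_le_three_mul_add (hk : ∀ i, 1 ≤ k i) (hξ : ∀ i, ξ i = 1 ∨ ξ i = -1) {M : ℕ}
    (hend : ξ (M + 1) = -1 → 2 ≤ k (M + 1)) {t : ℝ} (ht0 : 0 ≤ t) (ht1 : t ≤ 1) :
    (cfQ k ξ (M + 1) : ℝ) ≤ 3 * (cfQ k ξ (M + 1) + ξ (M + 1) * t * cfQ k ξ M) := by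
  have hM := one_le_cfQ hk hξ M
  have hM' : (1 : ℝ) ≤ cfQ k ξ M := by exact_mod_cast hM
  have hM1 : (1 : ℝ) ≤ cfQ k ξ (M + 1) := by exact_mod_cast one_le_cfQ hk hξ (M + 1)
  rcases hξ (M + 1) with h | h
  · rw [h]; push_cast; nlinarith
  · have hk2 : (2 : ℤ) ≤ k (M + 1) := by exact_mod_cast hend h
    have h3 : (3 : ℝ) * cfQ k ξ M ≤ cfQ k ξ (M + 1) := by
      have := (cfQ_succ_bounds hk hξ M).1
      exact_mod_cast (by nlinarith : (3 : ℤ) * cfQ k ξ M ≤ cfQ k ξ (M + 1))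
    rw [h]; push_cast; nlinarith

lemma cfQ_le_three_mul_sub (hk : ∀ i, 1 ≤ k i) (hξ : ∀ i, ξ i = 1 ∨ ξ i = -1) {M : ℕ}
    (hend : ξ (M + 1) = -1 → 2 ≤ k (M + 1)) :
    cfQ k ξ (M + 1) ≤ 3 * (cfQ k ξ (M + 2) - cfQ k ξ (M + 1)) := by
  have h := cfQ_le_three_mul_add hk hξ hend zero_le_one le_rfl
  rw [mul_one] at h
  have h' : cfQ k ξ (M + 1) ≤ 3 * (cfQ k ξ (M + 1) + ξ (M + 1) * cfQ k ξ M) := by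
    exact_mod_cast h
  have hk' : (1 : ℤ) ≤ k (M + 2) := by exact_mod_cast hk (M + 2)
  have hQ := one_le_cfQ hk hξ (M + 1)
  rw [cfQ_add_two]
  nlinarith

lemma cfQ_add_of_run {a h : ℕ} (hrun : ∀ l < h, k (a + 1 + l) = 1 ∧ ξ (a + 1 + l) = -1) :
    ∀ i ≤ h, cfQ k ξ (a + i) = cfQ k ξ a + i * (cfQ k ξ (a + 1) - cfQ k ξ a) := by
  intro i
  induction i using Nat.strong_induction_on with
  | _ i ih =>
    match i with
    | 0 => intro _; simp
    | 1 => intro _; ring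
    | i + 2 =>
      intro hi
      obtain ⟨hk1, -⟩ := hrun (i + 1) (by omega)
      obtain ⟨-, hξ1⟩ := hrun i (by omega)
      rw [show a + (i + 2) = a + i + 2 by ring, cfQ_add_two,
        show a + i + 2 = a + 1 + (i + 1) by ring, hk1, show a + i + 1 = a + 1 + i by ring, hξ1,
        show a + 1 + i = a + (i + 1) by ring, ih (i + 1) (by omega) (by omega),
        ih i (by omega) (by omega)]
      push_cast
      ring

lemma cfP_mul_cfQ_sub (hξ : ∀ i, ξ i = 1 ∨ ξ i = -1) (i : ℕ) :
    cfP k ξ (i + 1) * cfQ k ξ i - cfQ k ξ (i + 1) * cfP k ξ i = 1 ∨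
      cfP k ξ (i + 1) * cfQ k ξ i - cfQ k ξ (i + 1) * cfP k ξ i = -1 := by
  induction i with
  | zero => simpa [cfP, cfQ] using hξ 0
  | succ i ih =>
    have hstep : cfP k ξ (i + 2) * cfQ k ξ (i + 1) - cfQ k ξ (i + 2) * cfP k ξ (i + 1) =
        -ξ (i + 1) * (cfP k ξ (i + 1) * cfQ k ξ i - cfQ k ξ (i + 1) * cfP k ξ i) := by
      rw [cfP_add_two, cfQ_add_two]; ring
    rw [hstep]
    rcases hξ (i + 1) with h | h <;> rcases ih with h' | h' <;> rw [h, h'] <;> norm_num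

lemma cfQ_congr {M : ℕ} (hk : ∀ i, 1 ≤ i → i ≤ M → k i = k' i)
    (hξ : ∀ i < M, ξ i = ξ' i) :
    cfQ k ξ M = cfQ k' ξ' M := by
  induction M using Nat.strong_induction_on with
  | _ M ih =>
    match M with
    | 0 => rfl
    | 1 => simp [cfQ, hk 1 le_rfl le_rfl]
    | M + 2 =>
      rw [cfQ_add_two, cfQ_add_two, hk (M + 2) (by omega) le_rfl, hξ (M + 1) (by omega),
        ih (M + 1) (by omega) (fun i h1 h2 => hk i h1 (by omega)) (fun i h => hξ i (by omega)),
        ih M (by omega) (fun i h1 h2 => hk i h1 (by omega)) (fun i h => hξ i (by omega))]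

lemma cfP_congr {M : ℕ} (hk : ∀ i, 1 ≤ i → i ≤ M → k i = k' i)
    (hξ : ∀ i < M, ξ i = ξ' i) :
    cfP k ξ M = cfP k' ξ' M := by
  induction M using Nat.strong_induction_on with
  | _ M ih =>
    match M with
    | 0 => rfl
    | 1 => simp [cfP, hξ 0 (by omega)]
    | M + 2 =>
      rw [cfP_add_two, cfP_add_two, hk (M + 2) (by omega) le_rfl, hξ (M + 1) (by omega),
        ih (M + 1) (by omega) (fun i h1 h2 => hk i h1 (by omega)) (fun i h => hξ i (by omega)),
        ih M (by omega) (fun i h1 h2 => hk i h1 (by omega)) (fun i h => hξ i (by omega))]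

end Recurrence

lemma mul_ecfQ_add_eq (hx : x ∈ ECFdom) (M : ℕ) :
    x * (ecfQ x (M + 1) + ecfDigXi x (M + 1) * ecfT^[M + 1] x * ecfQ x M) =
      ecfP x (M + 1) + ecfDigXi x (M + 1) * ecfT^[M + 1] x * ecfP x M := by
  induction M with
  | zero =>
    have hQ : ecfQ x 1 = 2 * (ecfK x : ℤ) := rfl
    have hP : ecfP x 1 = 1 := rfl
    have hξ : ecfDigXi x 1 = ecfXi x := rfl
    rw [zero_add, hQ, hP, hξ, Function.iterate_one]
    simp only [ecfQ, ecfP, cfQ, cfP]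
    push_cast
    rw [mul_one, mul_zero, add_zero, two_mul_ecfK_add_ecfXi_mul_ecfT,
      mul_one_div_cancel (pos_of_mem_ECFdom hx).ne']
  | succ M ih =>
    have hs := (pos_of_mem_ECFdom (ecfT_iterate_mem hx (M + 1))).ne'
    set s := ecfT^[M + 1] x
    have hinv : s * (2 * (ecfDigK x (M + 2) : ℝ) + ecfDigXi x (M + 2) * ecfT^[M + 2] x) = 1 := by
      rw [Function.iterate_succ_apply']
      change s * (2 * (ecfK s : ℝ) + ecfXi s * ecfT s) = 1
      rw [two_mul_ecfK_add_ecfXi_mul_ecfT, mul_one_div_cancel hs]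
    simp only [ecfQ, ecfP, cfQ_add_two, cfP_add_two] at ih hinv ⊢
    push_cast
    linear_combination (2 * (ecfDigK x (M + 2) : ℝ) + ecfDigXi x (M + 2) * ecfT^[M + 2] x) * ih
      + (ecfDigXi x (M + 1) * ((cfP (ecfDigK x) (ecfDigXi x) M : ℝ)
        - x * cfQ (ecfDigK x) (ecfDigXi x) M)) * hinv

lemma one_le_ecfQ (hx : x ∈ ECFdom) (i : ℕ) : 1 ≤ ecfQ x i :=
  one_le_cfQ (ecfDigK_pos hx) (ecfDigXi_eq_one_or x) i

lemma ecfQ_succ_bounds (hx : x ∈ ECFdom) (i : ℕ) :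
    (2 * (ecfDigK x (i + 1) : ℤ) - 1) * ecfQ x i ≤ ecfQ x (i + 1) ∧
      ecfQ x (i + 1) ≤ (2 * (ecfDigK x (i + 1) : ℤ) + 1) * ecfQ x i :=
  cfQ_succ_bounds (ecfDigK_pos hx) (ecfDigXi_eq_one_or x) i

lemma ecfQhat_le (hx : x ∈ ECFdom) {n : ℕ} (hn : n ≠ 0) :
    (ecfQhat x n : ℝ) ≤ 3 * ecfDigK x (ecfNu x n) * ecfQ x (ecfNu x n - 1) := by
  have hν : ecfNu x n - 1 + 1 = ecfNu x n := Nat.sub_add_cancel (one_le_ecfNu n)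
  have hup := (ecfQ_succ_bounds hx (ecfNu x n - 1)).2
  rw [hν] at hup
  have hk : (1 : ℤ) ≤ ecfDigK x (ecfNu x n) := by exact_mod_cast ecfDigK_pos hx _
  have hq := one_le_ecfQ hx (ecfNu x n - 1)
  rw [ecfQhat, if_neg hn]
  exact_mod_cast (by nlinarith :
    ecfQ x (ecfNu x n) ≤ 3 * ecfDigK x (ecfNu x n) * ecfQ x (ecfNu x n - 1))

lemma ecfQ_pred_le_three_mul_sub (hx : x ∈ ECFdom) (j : ℕ) :
    ecfQ x (ecfNu x j - 1) ≤ 3 * (ecfQ x (ecfNu x j) - ecfQ x (ecfNu x j - 1)) := by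
  rcases eq_or_ne j 0 with rfl | hj
  · have := ecfDigK_pos hx 1
    change (1 : ℤ) ≤ 3 * (2 * (ecfDigK x 1 : ℤ) - 1)
    omega
  obtain ⟨M, hM⟩ := Nat.exists_eq_add_of_le' (two_le_ecfNu (x := x) hj)
  rw [hM]
  exact cfQ_le_three_mul_sub (ecfDigK_pos hx) (ecfDigXi_eq_one_or x)
    (two_le_ecfDigK_of_ecfNu_eq hx hj hM)

noncomputable def blockFactor (x : ℝ) (j : ℕ) : ℝ :=
  ((sigmaH x (j + 1) : ℝ) + 1) * sigmaM x (j + 1) / 3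

lemma blockFactor_pos (hx : x ∈ ECFdom) (j : ℕ) : 0 < blockFactor x j := by
  have : (1 : ℝ) ≤ sigmaM x (j + 1) := by exact_mod_cast ecfDigK_pos hx _
  unfold blockFactor
  positivity

lemma blockFactor_mul_le (hx : x ∈ ECFdom) (j : ℕ) :
    blockFactor x j * ecfQ x (ecfNu x j - 1) ≤ ecfQ x (ecfNu x (j + 1) - 1) := by
  set a := ecfNu x j - 1
  set h := sigmaH x (j + 1)
  set m := sigmaM x (j + 1)
  have ha : ecfNu x j = a + 1 := (Nat.sub_add_cancel (one_le_ecfNu j)).symm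
  have hrun : ecfQ x (a + h) = ecfQ x a + h * (ecfQ x (a + 1) - ecfQ x a) :=
    cfQ_add_of_run (fun l hl => ha ▸ ecfDig_of_lt_sigmaH hx hl) h le_rfl
  have henter : ecfQ x a ≤ 3 * (ecfQ x (a + 1) - ecfQ x a) := by
    simpa only [← ha] using ecfQ_pred_le_three_mul_sub hx j
  have hnext : ecfNu x (j + 1) - 1 = a + h + 1 := by rw [ecfNu_succ_sub_one, ha]; ring
  have hlow : (2 * (m : ℤ) - 1) * ecfQ x (a + h) ≤ ecfQ x (a + h + 1) := by
    simpa only [m, sigmaM, hnext] using (ecfQ_succ_bounds hx (a + h)).1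
  have hm : (1 : ℤ) ≤ m := by exact_mod_cast ecfDigK_pos hx _
  have hQa := one_le_ecfQ hx a
  have hrun' : ((h : ℤ) + 1) * ecfQ x a ≤ 3 * ecfQ x (a + h) := by
    rw [hrun]; nlinarith [Int.natCast_nonneg h]
  have hQah : (0 : ℤ) ≤ ecfQ x (a + h) := by linarith [one_le_ecfQ hx (a + h)]
  have key : ((h : ℤ) + 1) * m * ecfQ x a ≤ 3 * ecfQ x (a + h + 1) := by
    nlinarith [mul_le_mul_of_nonneg_left hrun' (by linarith : (0 : ℤ) ≤ m)]
  rw [hnext, blockFactor]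
  have : (((h : ℤ) + 1) * m * ecfQ x a : ℝ) ≤ 3 * ecfQ x (a + h + 1) := by exact_mod_cast key
  push_cast at this
  linarith

lemma prod_blockFactor_le (hx : x ∈ ECFdom) (n : ℕ) :
    ∏ j ∈ Finset.range n, blockFactor x j ≤ ecfQ x (ecfNu x n - 1) := by
  induction n with
  | zero => simp [ecfNu, ecfQ, cfQ]
  | succ n ih =>
    rw [Finset.prod_range_succ, mul_comm]
    exact (mul_le_mul_of_nonneg_left ih (blockFactor_pos hx n).le).trans
      (blockFactor_mul_le hx n)

lemma abs_sub_mul_eq_of_moebius {t s ξ p₁ p₀ q₁ q₀ : ℝ} (hξ : |ξ| = 1)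
    (hdet : |p₁ * q₀ - q₁ * p₀| = 1)
    (hx : x * (q₁ + ξ * t * q₀) = p₁ + ξ * t * p₀)
    (hy : y * (q₁ + ξ * s * q₀) = p₁ + ξ * s * p₀) :
    |x - y| * |(q₁ + ξ * t * q₀) * (q₁ + ξ * s * q₀)| = |t - s| := by
  rw [← abs_mul, abs_sub_comm t s, ← one_mul |s - t|, ← hξ, ← mul_one (|ξ| * _), ← hdet,
    ← abs_mul, ← abs_mul]
  congr 1
  linear_combination (q₁ + ξ * s * q₀) * hx - (q₁ + ξ * t * q₀) * hy

lemma abs_ecfP_mul_ecfQ_sub (x : ℝ) (M : ℕ) :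
    |(ecfP x (M + 1) * ecfQ x M - ecfQ x (M + 1) * ecfP x M : ℝ)| = 1 := by
  have h := cfP_mul_cfQ_sub (k := ecfDigK x) (ecfDigXi_eq_one_or x) M
  rw [← abs_eq (zero_le_one' ℤ)] at h
  exact_mod_cast h

/-- Both points are `x = (p + ξ t p') / (q + ξ t q')` with the same `p, p', q, q', ξ`, and with
`t = T^{M+1} x` in one digit interval, of length `≤ 1 / k_{M+2}²`. -/
lemma abs_sub_le_of_ecfDig_eq (hx : x ∈ ECFdom) (hy : y ∈ ECFdom) {M : ℕ}
    (hk : ∀ i, 1 ≤ i → i ≤ M + 2 → ecfDigK x i = ecfDigK y i)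
    (hξ : ∀ i ≤ M + 1, ecfDigXi x i = ecfDigXi y i)
    (hend : ecfDigXi y (M + 1) = -1 → 2 ≤ ecfDigK y (M + 1)) :
    |x - y| ≤ 9 / ((ecfDigK y (M + 2) : ℝ) ^ 2 * (ecfQ y (M + 1) : ℝ) ^ 2) := by
  have hQ : ∀ i ≤ M + 1, ecfQ x i = ecfQ y i := fun i hi =>
    cfQ_congr (fun j h1 h2 => hk j h1 (by omega)) (fun j hj => hξ j (by omega))
  have hP : ∀ i ≤ M + 1, ecfP x i = ecfP y i := fun i hi =>
    cfP_congr (fun j h1 h2 => hk j h1 (by omega)) (fun j hj => hξ j (by omega))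
  have ht := ecfT_iterate_mem hx (M + 1)
  have hs := ecfT_iterate_mem hy (M + 1)
  have hmx := mul_ecfQ_add_eq hx M
  rw [hQ _ le_rfl, hQ M (by omega), hP _ le_rfl, hP M (by omega), hξ _ le_rfl] at hmx
  have hξ1 : |(ecfDigXi y (M + 1) : ℝ)| = 1 := by
    rcases ecfDigXi_eq_one_or y (M + 1) with h | h <;> simp [h]
  have hkey := abs_sub_mul_eq_of_moebius hξ1 (abs_ecfP_mul_ecfQ_sub y M) hmx
    (mul_ecfQ_add_eq hy M)
  have hDx := cfQ_le_three_mul_add (ecfDigK_pos hy) (ecfDigXi_eq_one_or y) hend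
    (pos_of_mem_ECFdom ht).le ht.1.2
  have hDy := cfQ_le_three_mul_add (ecfDigK_pos hy) (ecfDigXi_eq_one_or y) hend
    (pos_of_mem_ECFdom hs).le hs.1.2
  have hts := abs_sub_le_of_ecfK_eq ht hs (hk (M + 2) (by omega) le_rfl)
  have hQ₁ : (1 : ℝ) ≤ ecfQ y (M + 1) := by exact_mod_cast one_le_ecfQ hy (M + 1)
  have hk₁ : (1 : ℝ) ≤ ecfDigK y (M + 2) := by exact_mod_cast ecfDigK_pos hy (M + 2)
  rw [show ecfK (ecfT^[M + 1] x) = ecfDigK y (M + 2) from hk (M + 2) (by omega) le_rfl] at hts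
  change ((ecfQ y (M + 1) : ℤ) : ℝ) ≤ 3 * (ecfQ y (M + 1) + ecfDigXi y (M + 1) * _ * ecfQ y M)
    at hDx hDy
  generalize (ecfQ y (M + 1) : ℝ) + ecfDigXi y (M + 1) * ecfT^[M + 1] x * ecfQ y M = Dx
    at hkey hDx
  generalize (ecfQ y (M + 1) : ℝ) + ecfDigXi y (M + 1) * ecfT^[M + 1] y * ecfQ y M = Dy
    at hkey hDy
  have hD : 0 < Dx * Dy := mul_pos (by linarith) (by linarith)
  rw [abs_of_pos hD] at hkey
  calc |x - y| = |ecfT^[M + 1] x - ecfT^[M + 1] y| / (Dx * Dy) := by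
        rw [← hkey, mul_div_cancel_right₀ _ hD.ne']
    _ ≤ (1 / (ecfDigK y (M + 2) : ℝ) ^ 2) / ((ecfQ y (M + 1) / 3) * (ecfQ y (M + 1) / 3)) :=
        div_le_div₀ (by positivity) hts (by positivity)
          (mul_le_mul (by linarith) (by linarith) (by positivity) (by linarith))
    _ = 9 / ((ecfDigK y (M + 2) : ℝ) ^ 2 * (ecfQ y (M + 1) : ℝ) ^ 2) := by
        field_simp; ring

lemma ecfNu_eq_of_sigmaCode_eq {n : ℕ}
    (h : ∀ j < n, sigmaCode x (j + 1) = sigmaCode y (j + 1)) :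
    ∀ j ≤ n, ecfNu x j = ecfNu y j := by
  intro j hj
  induction j with
  | zero => rfl
  | succ j ih =>
    have hH : sigmaH x (j + 1) = sigmaH y (j + 1) := congrArg Prod.fst (h j hj)
    rw [ecfNu_succ_eq, ecfNu_succ_eq, ih (by omega), hH]

lemma ecfDig_eq_of_sigmaCode_eq (hx : x ∈ ECFdom) (hy : y ∈ ECFdom) {n : ℕ}
    (h : ∀ j < n, sigmaCode x (j + 1) = sigmaCode y (j + 1)) :
    ∀ i, 1 ≤ i → i < ecfNu x n →
      ecfDigK x i = ecfDigK y i ∧ ecfDigXi x i = ecfDigXi y i := by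
  induction n with
  | zero => intro i h1 h2; simp [ecfNu] at h2; omega
  | succ n ih =>
    intro i h1 h2
    rcases lt_or_ge i (ecfNu x n) with hi | hi
    · exact ih (fun j hj => h j (by omega)) i h1 hi
    obtain ⟨hH, hM, hE⟩ : sigmaH x (n + 1) = sigmaH y (n + 1) ∧
        sigmaM x (n + 1) = sigmaM y (n + 1) ∧ sigmaE x (n + 1) = sigmaE y (n + 1) := by
      simpa [sigmaCode] using h n (Nat.lt_succ_self n)
    have hν := ecfNu_eq_of_sigmaCode_eq h n (by omega)
    obtain ⟨l, rfl⟩ : ∃ l, i = ecfNu x n + l := ⟨i - ecfNu x n, by omega⟩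
    rw [ecfNu_succ_eq] at h2
    rcases lt_or_ge l (sigmaH x (n + 1)) with hl | hl
    · rw [(ecfDig_of_lt_sigmaH hx hl).1, (ecfDig_of_lt_sigmaH hx hl).2, hν,
        (ecfDig_of_lt_sigmaH hy (hH ▸ hl)).1, (ecfDig_of_lt_sigmaH hy (hH ▸ hl)).2]
      simp
    · obtain rfl : l = sigmaH x (n + 1) := by omega
      exact ⟨by simpa only [sigmaM, ecfNu_succ_sub_one, hν, hH] using hM,
        by simpa only [sigmaE, ecfNu_succ_sub_one, hν, hH] using hE⟩

abbrev ECFCode (n : ℕ) : Type := (Fin n → ℕ × ℕ × Bool) × ℕ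

-- The first `n` Σ-symbols `(h, m, ε)`, with `ε = ±1` recorded as the boolean `ε = 1`,
-- followed by the ECF digit `k_{ν_n}`.
noncomputable def ecfCode (x : ℝ) (n : ℕ) : ECFCode n :=
  (fun j => (sigmaH x (j + 1), sigmaM x (j + 1), decide (sigmaE x (j + 1) = 1)),
    ecfDigK x (ecfNu x n))

lemma sigmaCode_eq_of_ecfCode_eq {n : ℕ} (h : ecfCode x n = ecfCode y n) :
    ∀ j < n, sigmaCode x (j + 1) = sigmaCode y (j + 1) := by
  intro j hj
  have hc := congrFun (congrArg Prod.fst h) ⟨j, hj⟩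
  simp only [ecfCode, Prod.mk.injEq] at hc
  obtain ⟨hH, hM, hE⟩ := hc
  have hE' : sigmaE x (j + 1) = sigmaE y (j + 1) := by
    have h₁ : sigmaE x (j + 1) = 1 ∨ sigmaE x (j + 1) = -1 := ecfDigXi_eq_one_or x _
    have h₂ : sigmaE y (j + 1) = 1 ∨ sigmaE y (j + 1) = -1 := ecfDigXi_eq_one_or y _
    rcases h₁ with h₁ | h₁ <;> rcases h₂ with h₂ | h₂ <;> rw [h₁, h₂] at hE ⊢ <;>
      simp at hE
  simp only [sigmaCode, hH, hM, hE']

lemma abs_sub_le_of_ecfCode_eq (hx : x ∈ ECFdom) (hy : y ∈ ECFdom) {n : ℕ} (hn : n ≠ 0)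
    (h : ecfCode x n = ecfCode y n) :
    |x - y| ≤ 9 / ((ecfDigK y (ecfNu y n) : ℝ) ^ 2 * (ecfQ y (ecfNu y n - 1) : ℝ) ^ 2) := by
  have hσ := sigmaCode_eq_of_ecfCode_eq h
  have hν := ecfNu_eq_of_sigmaCode_eq hσ n le_rfl
  have hdig := ecfDig_eq_of_sigmaCode_eq hx hy hσ
  obtain ⟨M, hM⟩ := Nat.exists_eq_add_of_le' (two_le_ecfNu (x := x) hn)
  have hk : ecfDigK x (M + 2) = ecfDigK y (M + 2) := by
    have := congrArg Prod.snd h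
    simp only [ecfCode] at this
    rwa [← hν, hM] at this
  rw [← hν, hM, show M + 2 - 1 = M + 1 from rfl]
  refine abs_sub_le_of_ecfDig_eq hx hy (fun i h1 h2 => ?_) (fun i hi => ?_)
    (two_le_ecfDigK_of_ecfNu_eq hy hn (hν ▸ hM))
  · rcases h2.lt_or_eq with h2 | rfl
    exacts [(hdig i h1 (by omega)).1, hk]
  · rcases Nat.eq_zero_or_pos i with rfl | h1
    exacts [rfl, (hdig i h1 (by omega)).2]

lemma ecfMu_le_two_smul_volume : ecfMu ≤ (2 : ℝ≥0∞) • volume := by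
  have hlog : 1 ≤ Real.log 3 := by
    rw [Real.le_log_iff_exp_le (by norm_num)]
    exact Real.exp_one_lt_d9.le.trans (by norm_num)
  calc ecfMu ≤ (volume.restrict (Set.Ioc (0 : ℝ) 1)).withDensity fun _ => 2 := by
        refine withDensity_mono ((ae_restrict_mem measurableSet_Ioc).mono fun a ha => ?_)
        rw [← ENNReal.ofReal_ofNat]
        refine ENNReal.ofReal_le_ofReal ?_
        have h1 : 1 / (3 - a) ≤ 1 / 2 :=
          one_div_le_one_div_of_le (by norm_num) (by linarith [ha.2])
        have h2 : 1 / (1 + a) ≤ 1 := by rw [div_le_one (by linarith [ha.1])]; linarith [ha.1]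
        have h3 : 1 / Real.log 3 ≤ 1 := by rwa [div_le_one (by linarith)]
        have h4 : 0 ≤ 1 / (3 - a) + 1 / (1 + a) := by
          have : 0 < 3 - a := by linarith [ha.2]
          have : 0 < 1 + a := by linarith [ha.1]
          positivity
        nlinarith
    _ ≤ (2 : ℝ≥0∞) • volume := by
        rw [withDensity_const]
        exact Measure.le_iff'.2 fun s => by
          simpa only [Measure.smul_apply, smul_eq_mul] using
            mul_le_mul_right (Measure.restrict_le_self s) 2

lemma ecfMu_closedBall_le (z r : ℝ) :
    ecfMu (Metric.closedBall z r) ≤ ENNReal.ofReal (4 * r) := by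
  calc ecfMu (Metric.closedBall z r) ≤ 2 * volume (Metric.closedBall z r) :=
        ecfMu_le_two_smul_volume _
    _ = ENNReal.ofReal (4 * r) := by
        rw [Real.volume_closedBall, ← ENNReal.ofReal_ofNat, ← ENNReal.ofReal_mul zero_le_two]
        ring_nf

lemma inv_sq_le_rpow_mul_rpow {u a b : ℝ} (ha : 0 < a) (hb : 0 < b) (hau : a ≤ u)
    (hbu : b ≤ u) : (u ^ 2)⁻¹ ≤ a ^ (-(1 / 2) : ℝ) * b ^ (-(3 / 2) : ℝ) := by
  have hu : 0 < u := ha.trans_le hau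
  calc (u ^ 2)⁻¹ = u ^ (-(1 / 2) : ℝ) * u ^ (-(3 / 2) : ℝ) := by
        rw [← Real.rpow_add hu, show (-(1 / 2) + -(3 / 2) : ℝ) = -(2 : ℕ) by norm_num,
          Real.rpow_neg hu.le, Real.rpow_natCast]
    _ ≤ a ^ (-(1 / 2) : ℝ) * b ^ (-(3 / 2) : ℝ) :=
        mul_le_mul (Real.rpow_le_rpow_of_nonpos ha hau (by norm_num))
          (Real.rpow_le_rpow_of_nonpos hb hbu (by norm_num)) (by positivity) (by positivity)

lemma tsum_fin_pi_prod_eq_pow {α : Type*} (f : α → ℝ≥0∞) (n : ℕ) :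
    ∑' g : Fin n → α, ∏ j, f (g j) = (∑' a, f a) ^ n := by
  induction n with
  | zero => simp [tsum_fintype]
  | succ n ih =>
    rw [← (Fin.consEquiv fun _ => α).tsum_eq, ENNReal.tsum_prod', pow_succ',
      ← ENNReal.tsum_mul_right]
    refine tsum_congr fun a => ?_
    simp only [Fin.consEquiv_apply, Fin.prod_univ_succ, Fin.cons_zero, Fin.cons_succ]
    rw [ENNReal.tsum_mul_left, ih]

noncomputable def rpowWeight (a : ℕ) : ℝ≥0∞ := ENNReal.ofReal ((a : ℝ) ^ (-(3 / 2) : ℝ))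

lemma tsum_rpowWeight_ne_top : ∑' a, rpowWeight a ≠ ∞ := by
  simp only [rpowWeight]
  rw [← ENNReal.ofReal_tsum_of_nonneg (fun _ => by positivity)
    (Real.summable_nat_rpow.2 (by norm_num))]
  exact ENNReal.ofReal_ne_top

noncomputable def symbolWeight (s : ℕ × ℕ × Bool) : ℝ≥0∞ :=
  ENNReal.ofReal ((((s.1 : ℝ) + 1) * s.2.1 / 3) ^ (-(3 / 2) : ℝ))

lemma symbolWeight_eq (s : ℕ × ℕ × Bool) :
    symbolWeight s =
      ENNReal.ofReal (3 ^ (3 / 2 : ℝ)) * rpowWeight (s.1 + 1) * rpowWeight s.2.1 := by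
  rw [symbolWeight, rpowWeight, rpowWeight, ← ENNReal.ofReal_mul (by positivity),
    ← ENNReal.ofReal_mul (by positivity), Real.div_rpow (by positivity) (by norm_num),
    Real.mul_rpow (by positivity) (by positivity), Real.rpow_neg (by norm_num : (0:ℝ) ≤ 3),
    div_inv_eq_mul]
  push_cast
  ring_nf

lemma tsum_symbolWeight_ne_top : ∑' s, symbolWeight s ≠ ∞ := by
  simp only [symbolWeight_eq, ENNReal.tsum_prod', ENNReal.tsum_mul_left, ENNReal.tsum_mul_right,
    tsum_fintype, Finset.sum_const, Finset.card_univ, Fintype.card_bool, nsmul_eq_mul]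
  have hshift : ∑' a, rpowWeight (a + 1) ≠ ∞ := ne_top_of_le_ne_top tsum_rpowWeight_ne_top
    (ENNReal.tsum_comp_le_tsum_of_injective (add_left_injective 1) _)
  finiteness [tsum_rpowWeight_ne_top, hshift]

noncomputable def codeWeight (n : ℕ) (c : ECFCode n) : ℝ≥0∞ :=
  rpowWeight c.2 * ∏ j, symbolWeight (c.1 j)

lemma tsum_codeWeight (n : ℕ) :
    ∑' c, codeWeight n c = (∑' a, rpowWeight a) * (∑' s, symbolWeight s) ^ n := by
  rw [ENNReal.tsum_prod', ← tsum_fin_pi_prod_eq_pow, ← ENNReal.tsum_mul_left]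
  refine tsum_congr fun g => ?_
  simp only [codeWeight, ENNReal.tsum_mul_right]

def badSet (C : ℝ) (n : ℕ) : Set ℝ := {x | x ∈ ECFdom ∧ Real.exp (C * n) < ecfQhat x n}

lemma four_mul_cylinder_radius_le {C : ℝ} {n : ℕ} (hn : n ≠ 0) {z : ℝ}
    (hz : z ∈ badSet C n) :
    4 * (9 / ((ecfDigK z (ecfNu z n) : ℝ) ^ 2 * (ecfQ z (ecfNu z n - 1) : ℝ) ^ 2)) ≤
      324 * Real.exp (-(C / 2)) ^ n * ((ecfDigK z (ecfNu z n) : ℝ) ^ (-(3 / 2) : ℝ) *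
        ∏ j ∈ Finset.range n, blockFactor z j ^ (-(3 / 2) : ℝ)) := by
  obtain ⟨hzd, hbad⟩ := hz
  have hk : (1 : ℝ) ≤ ecfDigK z (ecfNu z n) := by exact_mod_cast ecfDigK_pos hzd _
  have hQ : (1 : ℝ) ≤ ecfQ z (ecfNu z n - 1) := by exact_mod_cast one_le_ecfQ hzd _
  have hprod := prod_blockFactor_le hzd n
  have hprod_pos : 0 < ∏ j ∈ Finset.range n, blockFactor z j :=
    Finset.prod_pos fun j _ => blockFactor_pos hzd j
  have hup := ecfQhat_le hzd hn
  set k : ℝ := (ecfDigK z (ecfNu z n) : ℝ)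
  set Q : ℝ := (ecfQ z (ecfNu z n - 1) : ℝ)
  have key := inv_sq_le_rpow_mul_rpow (u := 3 * k * Q)
    (b := k * ∏ j ∈ Finset.range n, blockFactor z j)
    (Real.exp_pos (C * n)) (mul_pos (by positivity) hprod_pos) (hbad.le.trans hup)
    (by nlinarith [mul_le_mul_of_nonneg_left hprod (by positivity : (0 : ℝ) ≤ k)])
  have hexp : Real.exp (C * n) ^ (-(1 / 2) : ℝ) = Real.exp (-(C / 2)) ^ n := by
    rw [← Real.exp_mul, ← Real.exp_nat_mul]; ring_nf
  rw [hexp, Real.mul_rpow (by positivity) hprod_pos.le, ← Real.finsetProd_rpow _ _ fun j _ =>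
    (blockFactor_pos hzd j).le] at key
  calc 4 * (9 / (k ^ 2 * Q ^ 2)) = 324 * ((3 * k * Q) ^ 2)⁻¹ := by field_simp; ring
    _ ≤ _ := (mul_le_mul_of_nonneg_left key (by norm_num)).trans_eq (mul_assoc _ _ _).symm

lemma ecfMu_badSet_inter_ecfCode_le {C : ℝ} {n : ℕ} (hn : n ≠ 0)
    (c : ECFCode n) :
    ecfMu {x | x ∈ badSet C n ∧ ecfCode x n = c} ≤
      ENNReal.ofReal (324 * Real.exp (-(C / 2)) ^ n) * codeWeight n c := by
  rcases Set.eq_empty_or_nonempty {x | x ∈ badSet C n ∧ ecfCode x n = c} with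
    h | ⟨z, hz, rfl⟩
  · simp [h]
  calc ecfMu _ ≤ ecfMu (Metric.closedBall z
        (9 / ((ecfDigK z (ecfNu z n) : ℝ) ^ 2 * (ecfQ z (ecfNu z n - 1) : ℝ) ^ 2))) :=
        measure_mono fun x (hx : x ∈ badSet C n ∧ ecfCode x n = ecfCode z n) => by
          rw [Metric.mem_closedBall, Real.dist_eq]
          exact abs_sub_le_of_ecfCode_eq hx.1.1 hz.1 hn hx.2
    _ ≤ ENNReal.ofReal (4 * _) := ecfMu_closedBall_le _ _
    _ ≤ ENNReal.ofReal _ := ENNReal.ofReal_le_ofReal (four_mul_cylinder_radius_le hn hz)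
    _ = ENNReal.ofReal (324 * Real.exp (-(C / 2)) ^ n) * codeWeight n (ecfCode z n) := by
        rw [ENNReal.ofReal_mul (by positivity)]
        congr 1
        rw [ENNReal.ofReal_mul (by positivity), ENNReal.ofReal_prod_of_nonneg fun j _ =>
          Real.rpow_nonneg (blockFactor_pos hz.1 j).le _,
          codeWeight, ← Fin.prod_univ_eq_prod_range]
        rfl

lemma ecfMu_badSet_le (C : ℝ) (n : ℕ) :
    ecfMu (badSet C n) ≤ 324 * (∑' a, rpowWeight a) *
      (ENNReal.ofReal (Real.exp (-(C / 2))) * ∑' s, symbolWeight s) ^ n := by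
  rcases eq_or_ne n 0 with rfl | hn
  · have : badSet C 0 = ∅ := Set.eq_empty_of_forall_notMem fun x hx => by
      simp [badSet, ecfQhat] at hx
    simp [this]
  calc ecfMu (badSet C n) ≤ ecfMu (⋃ c, {x | x ∈ badSet C n ∧ ecfCode x n = c}) :=
        measure_mono fun x hx => Set.mem_iUnion.2 ⟨_, hx, rfl⟩
    _ ≤ ∑' c, ecfMu {x | x ∈ badSet C n ∧ ecfCode x n = c} := measure_iUnion_le _
    _ ≤ ∑' c, ENNReal.ofReal (324 * Real.exp (-(C / 2)) ^ n) * codeWeight n c :=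
        ENNReal.tsum_le_tsum (ecfMu_badSet_inter_ecfCode_le hn)
    _ = _ := by
        rw [ENNReal.tsum_mul_left, tsum_codeWeight, ENNReal.ofReal_mul (by norm_num),
          ENNReal.ofReal_pow (by positivity), mul_pow]
        norm_num
        ring

lemma exists_pos_ofReal_exp_mul_lt_one {K : ℝ≥0∞} (hK : K ≠ ∞) :
    ∃ C : ℝ, 0 < C ∧ ENNReal.ofReal (Real.exp (-(C / 2))) * K < 1 := by
  have h2 : (0 : ℝ) < K.toReal + 2 := by positivity
  refine ⟨2 * Real.log (K.toReal + 2),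
    mul_pos two_pos (Real.log_pos (by linarith [K.toReal_nonneg])), ?_⟩
  rw [mul_div_cancel_left₀ _ two_ne_zero, Real.exp_neg, Real.exp_log h2]
  calc ENNReal.ofReal (K.toReal + 2)⁻¹ * K
        = ENNReal.ofReal ((K.toReal + 2)⁻¹ * K.toReal) := by
        rw [ENNReal.ofReal_mul (by positivity), ENNReal.ofReal_toReal hK]
    _ < 1 := by
        rw [ENNReal.ofReal_lt_one, inv_mul_lt_iff₀ h2]
        linarith

/-- Upper bound for the growth of the `R`-denominators: there is `C₁ > 0` such that
for `μ`-a.e. irrational `x ∈ (0,1]`, eventually `q̂_n(x) ≤ e^{C₁ n}`. -/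
theorem ecfQhat_upper_bound :
    ∃ C₁ : ℝ, 0 < C₁ ∧
      ∀ᵐ x ∂ecfMu, x ∈ ECFdom →
        ∃ N : ℕ, ∀ n : ℕ, N ≤ n → (ecfQhat x n : ℝ) ≤ Real.exp (C₁ * n) := by
  obtain ⟨C, hC, hratio⟩ := exists_pos_ofReal_exp_mul_lt_one tsum_symbolWeight_ne_top
  have hsum : ∑' n, ecfMu (badSet C n) ≠ ∞ :=
    ne_top_of_le_ne_top
      (by rw [ENNReal.tsum_mul_left]
          finiteness [tsum_rpowWeight_ne_top, tsum_geometric_lt_top.2 hratio])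
      (ENNReal.tsum_le_tsum (ecfMu_badSet_le C))
  refine ⟨C, hC, ?_⟩
  filter_upwards [ae_eventually_notMem hsum] with x hx hdom
  obtain ⟨N, hN⟩ := eventually_atTop.1 hx
  exact ⟨N, fun n hn => not_lt.1 fun h => hN n hn ⟨hdom, h⟩⟩
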